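/- arXiv:1901.01587 — 6 statements merged into one kernel-verified Lean document; each statement's English description precedes it below -/
import Mathlib

section
/- For any random vector X = (X_1,...,X_n) with finite first moments, any 1 ≤ k ≤ n, and any t > 0, E[max_{|I|=k} Σ_{i∈I} |X_i|] ≤ t·k + Σ_{i=1}^n E[|X_i|·1_{{|X_i|≥t}}]. Consequently, with t(k,X) := inf{t>0 : (1/t)·Σ_{i=1}^n E[|X_i|·1_{{|X_i|≥t}}] ≤ k}, one has E[max_{|I|=k} Σ_{i∈I} |X_i|] ≤ 2·k·t(k,X). -/
open MeasureTheory Finset Pointwise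

noncomputable def maxKSum {n : ℕ} (k : ℕ) (x : Fin n → ℝ) : ℝ :=
  sSup {y | ∃ I : Finset (Fin n), I.card = k ∧ y = ∑ i ∈ I, |x i|}

noncomputable def kthMax {n : ℕ} (k : ℕ) (x : Fin n → ℝ) : ℝ :=
  sSup {t : ℝ | k ≤ (Finset.univ.filter (fun i => t ≤ |x i|)).card}

noncomputable def tk {Ω : Type*} [MeasurableSpace Ω] (μ : Measure Ω) {n : ℕ}
    (X : Fin n → Ω → ℝ) (k : ℝ) : ℝ :=
  sInf {t : ℝ | 0 < t ∧ ∑ i, ∫ ω in {ω | t ≤ |X i ω|}, |X i ω| ∂μ ≤ k * t}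

noncomputable def tstar {Ω : Type*} [MeasurableSpace Ω] (μ : Measure Ω) {n : ℕ}
    (X : Fin n → Ω → ℝ) (p : ℝ) : ℝ :=
  sInf {t : ℝ | 0 < t ∧ ∑ i, (μ {ω | t ≤ |X i ω|}).toReal ≤ p}

def IsLogConcave {E : Type*} [AddCommGroup E] [Module ℝ E] [TopologicalSpace E]
    [MeasurableSpace E] (ν : Measure E) : Prop :=
  ∀ (K L : Set E) (l : ℝ), IsCompact K → IsCompact L → K.Nonempty → L.Nonempty →
    l ∈ Set.Icc (0 : ℝ) 1 → ν K ^ l * ν L ^ (1 - l) ≤ ν (l • K + (1 - l) • L)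

noncomputable def med {Ω : Type*} [MeasurableSpace Ω] (μ : Measure Ω) (f : Ω → ℝ) : ℝ :=
  sInf {t : ℝ | (1 : ℝ) / 2 ≤ (μ {ω | f ω ≤ t}).toReal}

noncomputable def kthMaxOn {n : ℕ} (J : Finset (Fin n)) (k : ℕ) (x : Fin n → ℝ) : ℝ :=
  sSup {t : ℝ | k ≤ (J.filter (fun i => t ≤ |x i|)).card}

lemma integral_indicator_null {Ω : Type*} [MeasurableSpace Ω] {μ : Measure Ω} {s : Set Ω}
    (hs : NullMeasurableSet s μ) (f : Ω → ℝ) :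
    ∫ ω, s.indicator f ω ∂μ = ∫ ω in s, f ω ∂μ := by
  have h1 : s =ᵐ[μ] MeasureTheory.toMeasurable μ s := hs.toMeasurable_ae_eq.symm
  rw [integral_congr_ae (indicator_ae_eq_of_ae_eq_set h1),
    integral_indicator (measurableSet_toMeasurable μ s),
    Measure.restrict_congr_set h1.symm]

lemma maxKSum_le {n k : ℕ} (hkn : k ≤ n) {x : Fin n → ℝ} {c : ℝ}
    (h : ∀ I : Finset (Fin n), I.card = k → ∑ i ∈ I, |x i| ≤ c) : maxKSum k x ≤ c := by
  obtain ⟨I, -, hI⟩ := Finset.exists_subset_card_eq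
    (show k ≤ (Finset.univ : Finset (Fin n)).card by simpa using hkn)
  exact csSup_le ⟨∑ i ∈ I, |x i|, I, hI, rfl⟩ (by rintro y ⟨J, hJ, rfl⟩; exact h J hJ)

lemma maxKSum_nonneg {n k : ℕ} (hkn : k ≤ n) (x : Fin n → ℝ) : 0 ≤ maxKSum k x := by
  obtain ⟨I, -, hI⟩ := Finset.exists_subset_card_eq
    (show k ≤ (Finset.univ : Finset (Fin n)).card by simpa using hkn)
  have hbdd : BddAbove {y | ∃ I : Finset (Fin n), I.card = k ∧ y = ∑ i ∈ I, |x i|} := by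
    refine ⟨∑ i, |x i|, ?_⟩
    rintro y ⟨J, hJ, rfl⟩
    exact Finset.sum_le_sum_of_subset_of_nonneg (Finset.subset_univ J)
      (fun i _ _ => abs_nonneg _)
  exact le_trans (Finset.sum_nonneg fun i _ => abs_nonneg _)
    (le_csSup hbdd ⟨I, hI, rfl⟩)

theorem stmt_0 {Ω : Type*} [MeasurableSpace Ω] (μ : Measure Ω) [IsProbabilityMeasure μ]
    {n k : ℕ} (hk1 : 1 ≤ k) (hkn : k ≤ n) (X : Fin n → Ω → ℝ)
    (hint : ∀ i, Integrable (X i) μ) :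
    (∀ t : ℝ, 0 < t →
      ∫ ω, maxKSum k (fun i => X i ω) ∂μ ≤
        t * k + ∑ i, ∫ ω in {ω | t ≤ |X i ω|}, |X i ω| ∂μ) ∧
    ∫ ω, maxKSum k (fun i => X i ω) ∂μ ≤ 2 * k * tk μ X k := by
  -- null measurability of the level sets
  have hns : ∀ (i : Fin n) (t : ℝ), NullMeasurableSet {ω | t ≤ |X i ω|} μ := fun i t =>
    ((hint i).abs).aemeasurable.nullMeasurable measurableSet_Ici
  -- Part 1
  have part1 : ∀ t : ℝ, 0 < t →
      ∫ ω, maxKSum k (fun i => X i ω) ∂μ ≤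
        t * k + ∑ i, ∫ ω in {ω | t ≤ |X i ω|}, |X i ω| ∂μ := by
    intro t ht
    set g : Fin n → Ω → ℝ :=
      fun i => Set.indicator {ω | t ≤ |X i ω|} (fun ω => |X i ω|) with hg
    have hgi : ∀ i, Integrable (g i) μ := by
      intro i
      have hm := measurableSet_toMeasurable μ {ω | t ≤ |X i ω|}
      have h1 : {ω | t ≤ |X i ω|} =ᵐ[μ] MeasureTheory.toMeasurable μ {ω | t ≤ |X i ω|} :=
        (hns i t).toMeasurable_ae_eq.symm
      exact (((hint i).abs).indicator hm).congr
        (indicator_ae_eq_of_ae_eq_set h1).symm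
    have hgnn : ∀ i ω, 0 ≤ g i ω := fun i ω =>
      Set.indicator_nonneg (fun ω _ => abs_nonneg _) ω
    have hG : Integrable (fun ω => t * k + ∑ i, g i ω) μ :=
      (integrable_const _).add (integrable_finset_sum _ fun i _ => hgi i)
    have hub : ∀ ω, maxKSum k (fun i => X i ω) ≤ t * k + ∑ i, g i ω := by
      intro ω
      refine maxKSum_le hkn fun I hI => ?_
      have hterm : ∀ i ∈ I, |X i ω| ≤ t + g i ω := by
        intro i _
        by_cases h : t ≤ |X i ω|
        · simp only [hg, Set.indicator_of_mem (show ω ∈ {ω | t ≤ |X i ω|} from h)]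
          linarith [ht.le]
        · simp only [hg, Set.indicator_of_notMem
            (show ω ∉ {ω | t ≤ |X i ω|} from h)]
          linarith [not_le.mp h]
      calc ∑ i ∈ I, |X i ω| ≤ ∑ i ∈ I, (t + g i ω) := Finset.sum_le_sum hterm
        _ = I.card * t + ∑ i ∈ I, g i ω := by
            rw [Finset.sum_add_distrib, Finset.sum_const, nsmul_eq_mul]
        _ ≤ t * k + ∑ i, g i ω := by
            rw [hI]
            exact add_le_add (le_of_eq (mul_comm _ _))
              (Finset.sum_le_sum_of_subset_of_nonneg (Finset.subset_univ I)
                (fun i _ _ => hgnn i ω))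
    calc ∫ ω, maxKSum k (fun i => X i ω) ∂μ
        ≤ ∫ ω, (t * k + ∑ i, g i ω) ∂μ :=
          integral_mono_of_nonneg
            (Filter.Eventually.of_forall fun ω => maxKSum_nonneg hkn _)
            hG (Filter.Eventually.of_forall hub)
      _ = t * k + ∑ i, ∫ ω, g i ω ∂μ := by
          rw [integral_add (integrable_const _) (integrable_finset_sum _ fun i _ => hgi i),
            integral_const, integral_finset_sum _ fun i _ => hgi i]
          simp
      _ = t * k + ∑ i, ∫ ω in {ω | t ≤ |X i ω|}, |X i ω| ∂μ := by
          congr 1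
          exact Finset.sum_congr rfl fun i _ => integral_indicator_null (hns i t) _
  refine ⟨part1, ?_⟩
  -- Part 2
  set S : Set ℝ :=
    {t : ℝ | 0 < t ∧ ∑ i, ∫ ω in {ω | t ≤ |X i ω|}, |X i ω| ∂μ ≤ (k : ℝ) * t} with hS
  have hk0 : (0 : ℝ) < k := by exact_mod_cast hk1
  set M : ℝ := ∑ i, ∫ ω, |X i ω| ∂μ with hM
  have hM0 : 0 ≤ M := Finset.sum_nonneg fun i _ =>
    integral_nonneg fun ω => abs_nonneg _
  have hSne : S.Nonempty := by
    refine ⟨M / k + 1, ⟨by positivity, ?_⟩⟩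
    have hle : ∑ i, ∫ ω in {ω | M / k + 1 ≤ |X i ω|}, |X i ω| ∂μ ≤ M := by
      apply Finset.sum_le_sum
      intro i _
      exact setIntegral_le_integral ((hint i).abs)
        (Filter.Eventually.of_forall fun ω => abs_nonneg _)
    have : (k : ℝ) * (M / k + 1) = M + k := by field_simp
    rw [this]
    linarith
  have h2k : (0 : ℝ) < 2 * k := by positivity
  have hlb : ∀ t ∈ S, (∫ ω, maxKSum k (fun i => X i ω) ∂μ) / (2 * k) ≤ t := by
    rintro t ⟨ht, hts⟩
    rw [div_le_iff₀ h2k]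
    calc ∫ ω, maxKSum k (fun i => X i ω) ∂μ
        ≤ t * k + ∑ i, ∫ ω in {ω | t ≤ |X i ω|}, |X i ω| ∂μ := part1 t ht
      _ ≤ t * k + k * t := by linarith
      _ = t * (2 * k) := by ring
  have := le_csInf hSne hlb
  rw [div_le_iff₀ h2k] at this
  calc ∫ ω, maxKSum k (fun i => X i ω) ∂μ ≤ sInf S * (2 * k) := this
    _ = 2 * k * tk μ X k := by rw [tk]; ring
end

section
/- For any real numbers z_1,...,z_n and 1 ≤ k ≤ n, the sum of the k largest values among |z_1|,...,|z_n| equals ∫_0^∞ min{k, #{i : |z_i| ≥ s}} ds; that is, max_{|I|=k} Σ_{i∈I} |z_i| = ∫_0^∞ min{k, Σ_{i=1}^n 1_{{|z_i| ≥ s}}} ds. -/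
/-!
A `k`-subset `I` maximizing `∑ i ∈ I, |z i|` consists of `k` largest values: otherwise exchanging
an element of `I` for a larger one outside `I` would increase the sum. For such an `I` and every
level `s`, either all of `I` lies above `s` or every index above `s` lies in `I`, so
`min k #{i | s ≤ |z i|} = #{i ∈ I | s ≤ |z i|}`. Integrating over `s > 0` and using the layer-cake
identity `∫₀^∞ 1[s ≤ c] ds = c` gives `∑ i ∈ I, |z i|`.
-/

open MeasureTheory Finset Pointwise

lemma integral_Ioi_zero_indicator_Iic {c : ℝ} (hc : 0 ≤ c) :
    ∫ s in Set.Ioi 0, (Set.Iic c).indicator (1 : ℝ → ℝ) s = c := by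
  rw [integral_indicator_one measurableSet_Iic, measureReal_restrict_apply measurableSet_Iic,
    Set.Iic_inter_Ioi, Real.volume_real_Ioc_of_le hc, sub_zero]

lemma integrableOn_Ioi_zero_indicator_Iic (c : ℝ) :
    IntegrableOn ((Set.Iic c).indicator (1 : ℝ → ℝ)) (Set.Ioi 0) := by
  rw [IntegrableOn, integrable_indicator_iff measurableSet_Iic, IntegrableOn,
    Measure.restrict_restrict measurableSet_Iic, Set.Iic_inter_Ioi]
  exact integrableOn_const measure_Ioc_lt_top.ne

variable {ι : Type*}

lemma integral_Ioi_zero_card_filter_le {I : Finset ι} {a : ι → ℝ} (ha : ∀ i ∈ I, 0 ≤ a i) :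
    ∫ s in Set.Ioi 0, (#{i ∈ I | s ≤ a i} : ℝ) = ∑ i ∈ I, a i := by
  have hcard (s : ℝ) : (#{i ∈ I | s ≤ a i} : ℝ) = ∑ i ∈ I, (Set.Iic (a i)).indicator 1 s := by
    simp [Set.indicator_apply]
  simp_rw [hcard]
  rw [integral_finsetSum I fun i _ => integrableOn_Ioi_zero_indicator_Iic (a i)]
  exact sum_congr rfl fun i hi => integral_Ioi_zero_indicator_Iic (ha i hi)

lemma le_of_forall_sum_le_of_mem_of_notMem [DecidableEq ι] {a : ι → ℝ} {I : Finset ι}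
    (hmax : ∀ J : Finset ι, #J = #I → ∑ i ∈ J, a i ≤ ∑ i ∈ I, a i) {i j : ι}
    (hi : i ∈ I) (hj : j ∉ I) : a j ≤ a i := by
  have hj' : j ∉ I.erase i := fun h => hj (mem_of_mem_erase h)
  have hcard : #(insert j (I.erase i)) = #I := by
    rw [card_insert_of_notMem hj', card_erase_add_one hi]
  have hswap := hmax _ hcard
  rw [sum_insert hj', sum_erase_eq_sub hi] at hswap
  linarith

lemma min_card_card_filter_le [Fintype ι] {a : ι → ℝ} {I : Finset ι}
    (htop : ∀ i ∈ I, ∀ j ∉ I, a j ≤ a i) (s : ℝ) :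
    min #I #{i | s ≤ a i} = #{i ∈ I | s ≤ a i} := by
  classical
  set F : Finset ι := {i | s ≤ a i}
  have hinter : {i ∈ I | s ≤ a i} = I ∩ F := by
    rw [inter_filter, inter_univ]
  rw [hinter]
  by_cases hall : ∀ i ∈ I, s ≤ a i
  · have hsub : I ⊆ F := fun i hi => mem_filter.2 ⟨mem_univ i, hall i hi⟩
    rw [inter_eq_left.2 hsub, min_eq_left (card_le_card hsub)]
  · simp only [not_forall, not_le] at hall
    obtain ⟨i₀, hi₀, hs⟩ := hall
    have hsub : F ⊆ I := fun j hj => by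
      by_contra hjI
      exact (lt_of_le_of_lt (htop i₀ hi₀ j hjI) hs).not_ge (mem_filter.1 hj).2
    rw [inter_eq_right.2 hsub, min_eq_right (card_le_card hsub)]

lemma maxKSum_eq_sum {n k : ℕ} {z : Fin n → ℝ} {I : Finset (Fin n)} (hI : #I = k)
    (hmax : ∀ J : Finset (Fin n), #J = k → ∑ i ∈ J, |z i| ≤ ∑ i ∈ I, |z i|) :
    maxKSum k z = ∑ i ∈ I, |z i| := by
  refine IsGreatest.csSup_eq ⟨⟨I, hI, rfl⟩, ?_⟩
  rintro _ ⟨J, hJ, rfl⟩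
  exact hmax J hJ

theorem stmt_1_general {n : ℕ} (z : Fin n → ℝ) (k : ℕ) (hkn : k ≤ n) :
    maxKSum k z =
      ∫ s in Set.Ioi (0 : ℝ),
        min (k : ℝ) ((Finset.univ.filter (fun i => s ≤ |z i|)).card : ℝ) := by
  classical
  obtain ⟨I, hI, hImax⟩ := exists_max_image (univ.powersetCard k) (fun J => ∑ i ∈ J, |z i|)
    (powersetCard_nonempty.2 (by simpa using hkn))
  have hIk : #I = k := (mem_powersetCard.1 hI).2
  have hmax (J : Finset (Fin n)) (hJ : #J = k) : ∑ i ∈ J, |z i| ≤ ∑ i ∈ I, |z i| :=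
    hImax J (mem_powersetCard.2 ⟨subset_univ J, hJ⟩)
  have htop : ∀ i ∈ I, ∀ j ∉ I, |z j| ≤ |z i| := fun i hi j hj =>
    le_of_forall_sum_le_of_mem_of_notMem (fun J hJ => hmax J (hJ.trans hIk)) hi hj
  rw [maxKSum_eq_sum hIk hmax, ← integral_Ioi_zero_card_filter_le fun i _ => abs_nonneg (z i)]
  refine setIntegral_congr_fun measurableSet_Ioi fun s _ => ?_
  rw [← hIk]
  exact_mod_cast (min_card_card_filter_le htop s).symm

theorem stmt_1 {n : ℕ} (z : Fin n → ℝ) (k : ℕ) (hk1 : 1 ≤ k) (hkn : k ≤ n) :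
    maxKSum k z =
      ∫ s in Set.Ioi (0 : ℝ),
        min (k : ℝ) ((Finset.univ.filter (fun i => s ≤ |z i|)).card : ℝ) :=
  stmt_1_general z k hkn
end

section
/- Let X_1,...,X_n be random variables with finite first moments and define N(s) := Σ_{i=1}^n 1_{{|X_i| ≥ s}}. Then for any 1 ≤ k ≤ n, E[max_{|I|=k} Σ_{i∈I} |X_i|] = ∫_0^∞ Σ_{l=1}^k P(N(s) ≥ l) ds. -/
open MeasureTheory Finset Pointwise

/-! Write `x*_l = kthMax l x` for the `l`-th largest of the `|x i|`. Peeling off a coordinate of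
largest modulus shows that `∑ i ∈ I, |x i|` is the sum of the order statistics of `I`, and these are
dominated by those of the whole vector, with equality for the indices of the `k` largest values;
hence `maxKSum k x = ∑ l ≤ k, x*_l`. Moreover `N(s) ≥ l` holds exactly when `s ≤ x*_l`, so the
layer cake formula `E[x*_l] = ∫₀^∞ P(x*_l ≥ s) ds` identifies the `l`-th summand. -/

theorem Finset.sum_Icc_one_succ {M : Type*} [AddCommMonoid M] (f : ℕ → M) (k : ℕ) :
    ∑ l ∈ Icc 1 (k + 1), f l = f 1 + ∑ l ∈ Icc 1 k, f (l + 1) := by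
  induction k with
  | zero => simp
  | succ k ih => rw [sum_Icc_succ_top (by omega), ih, sum_Icc_succ_top (by omega), add_assoc]

section KthMaxOn

variable {n : ℕ} (x : Fin n → ℝ) {J : Finset (Fin n)} {i₀ : Fin n}

theorem setOf_one_le_card_filter (hi₀ : i₀ ∈ J) (hmax : ∀ i ∈ J, |x i| ≤ |x i₀|) :
    {t : ℝ | 1 ≤ #{i ∈ J | t ≤ |x i|}} = Set.Iic |x i₀| := by
  ext t
  simp only [Set.mem_ofPred_eq, Set.mem_Iic, one_le_card, filter_nonempty_iff]
  exact ⟨fun ⟨i, hi, ht⟩ => ht.trans (hmax i hi), fun ht => ⟨i₀, hi₀, ht⟩⟩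

theorem setOf_succ_le_card_filter (hi₀ : i₀ ∈ J) (hmax : ∀ i ∈ J, |x i| ≤ |x i₀|) {l : ℕ}
    (hl : 1 ≤ l) :
    {t : ℝ | l + 1 ≤ #{i ∈ J | t ≤ |x i|}} = {t : ℝ | l ≤ #{i ∈ J.erase i₀ | t ≤ |x i|}} := by
  ext t
  simp only [Set.mem_ofPred_eq, filter_erase]
  by_cases ht : t ≤ |x i₀|
  · have hmem : i₀ ∈ {i ∈ J | t ≤ |x i|} := mem_filter.mpr ⟨hi₀, ht⟩
    have := card_pos.mpr ⟨i₀, hmem⟩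
    rw [card_erase_of_mem hmem]
    omega
  · have hempty : {i ∈ J | t ≤ |x i|} = ∅ :=
      filter_eq_empty_iff.mpr fun i hi hti => ht (hti.trans (hmax i hi))
    simp only [hempty, erase_empty, card_empty]
    omega

theorem setOf_le_card_filter_eq_Iic {l : ℕ} (hl : 1 ≤ l) (hlJ : l ≤ #J) :
    {t : ℝ | l ≤ #{i ∈ J | t ≤ |x i|}} = Set.Iic (kthMaxOn J l x) := by
  suffices ∃ c, {t : ℝ | l ≤ #{i ∈ J | t ≤ |x i|}} = Set.Iic c by
    obtain ⟨c, hc⟩ := this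
    rw [kthMaxOn, hc, csSup_Iic]
  induction l, hl using Nat.le_induction generalizing J with
  | base =>
    obtain ⟨i₀, hi₀, hmax⟩ := J.exists_max_image (|x ·|) (card_pos.mp hlJ)
    exact ⟨_, setOf_one_le_card_filter x hi₀ hmax⟩
  | succ l hl ih =>
    obtain ⟨i₀, hi₀, hmax⟩ := J.exists_max_image (|x ·|) (card_pos.mp (by omega))
    rw [setOf_succ_le_card_filter x hi₀ hmax hl]
    exact ih (by rw [card_erase_of_mem hi₀]; omega)

theorem le_card_filter_iff_le_kthMaxOn {l : ℕ} (hl : 1 ≤ l) (hlJ : l ≤ #J) (t : ℝ) :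
    l ≤ #{i ∈ J | t ≤ |x i|} ↔ t ≤ kthMaxOn J l x :=
  Set.ext_iff.mp (setOf_le_card_filter_eq_Iic x hl hlJ) t

theorem kthMaxOn_one (hi₀ : i₀ ∈ J) (hmax : ∀ i ∈ J, |x i| ≤ |x i₀|) :
    kthMaxOn J 1 x = |x i₀| := by
  rw [kthMaxOn, setOf_one_le_card_filter x hi₀ hmax, csSup_Iic]

theorem kthMaxOn_succ (hi₀ : i₀ ∈ J) (hmax : ∀ i ∈ J, |x i| ≤ |x i₀|) {l : ℕ} (hl : 1 ≤ l) :
    kthMaxOn J (l + 1) x = kthMaxOn (J.erase i₀) l x := by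
  rw [kthMaxOn, kthMaxOn, setOf_succ_le_card_filter x hi₀ hmax hl]

theorem sum_Icc_kthMaxOn_succ (hi₀ : i₀ ∈ J) (hmax : ∀ i ∈ J, |x i| ≤ |x i₀|) (k : ℕ) :
    ∑ l ∈ Icc 1 (k + 1), kthMaxOn J l x = |x i₀| + ∑ l ∈ Icc 1 k, kthMaxOn (J.erase i₀) l x := by
  rw [sum_Icc_one_succ, kthMaxOn_one x hi₀ hmax]
  congr 1
  exact sum_congr rfl fun l hl => kthMaxOn_succ x hi₀ hmax (mem_Icc.mp hl).1

theorem sum_abs_eq_sum_kthMaxOn (J : Finset (Fin n)) :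
    ∑ i ∈ J, |x i| = ∑ l ∈ Icc 1 #J, kthMaxOn J l x := by
  induction J using Finset.strongInduction with
  | H J ih =>
    rcases J.eq_empty_or_nonempty with rfl | hJ
    · simp
    obtain ⟨i₀, hi₀, hmax⟩ := J.exists_max_image (|x ·|) hJ
    rw [← card_erase_add_one hi₀, sum_Icc_kthMaxOn_succ x hi₀ hmax, ← add_sum_erase J _ hi₀,
      ih _ (erase_ssubset hi₀)]

theorem exists_card_eq_sum_abs_eq_sum_kthMaxOn {k : ℕ} (hk : k ≤ #J) :
    ∃ I ⊆ J, #I = k ∧ ∑ i ∈ I, |x i| = ∑ l ∈ Icc 1 k, kthMaxOn J l x := by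
  induction k generalizing J with
  | zero => exact ⟨∅, empty_subset J, card_empty, by simp⟩
  | succ k ih =>
    obtain ⟨i₀, hi₀, hmax⟩ := J.exists_max_image (|x ·|) (card_pos.mp (by omega))
    obtain ⟨I, hIJ, hI, hsum⟩ := ih (J := J.erase i₀) (by rw [card_erase_of_mem hi₀]; omega)
    have hi₀I : i₀ ∉ I := fun h => notMem_erase i₀ J (hIJ h)
    refine ⟨insert i₀ I, insert_subset hi₀ (hIJ.trans (erase_subset i₀ J)), ?_, ?_⟩
    · rw [card_insert_of_notMem hi₀I, hI]
    · rw [sum_insert hi₀I, hsum, sum_Icc_kthMaxOn_succ x hi₀ hmax]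

theorem kthMaxOn_mono {I : Finset (Fin n)} (hIJ : I ⊆ J) {l : ℕ} (hl : 1 ≤ l) (hlI : l ≤ #I) :
    kthMaxOn I l x ≤ kthMaxOn J l x := by
  rw [← le_card_filter_iff_le_kthMaxOn x hl (hlI.trans (card_le_card hIJ))]
  exact ((le_card_filter_iff_le_kthMaxOn x hl hlI _).mpr le_rfl).trans
    (card_le_card (filter_subset_filter _ hIJ))

end KthMaxOn

section KthMax

variable {n l : ℕ}

theorem maxKSum_eq_sum_kthMax (x : Fin n → ℝ) {k : ℕ} (hk : k ≤ n) :
    maxKSum k x = ∑ l ∈ Icc 1 k, kthMax l x := by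
  refine IsGreatest.csSup_eq ⟨?_, ?_⟩
  · obtain ⟨I, -, hI, hsum⟩ :=
      exists_card_eq_sum_abs_eq_sum_kthMaxOn x (J := univ) (by simpa using hk)
    exact ⟨I, hI, hsum.symm⟩
  · rintro _ ⟨I, rfl, rfl⟩
    rw [sum_abs_eq_sum_kthMaxOn x I]
    exact sum_le_sum fun l hl => kthMaxOn_mono x (subset_univ I) (mem_Icc.mp hl).1 (mem_Icc.mp hl).2

theorem le_card_filter_iff_le_kthMax (x : Fin n → ℝ) (hl : 1 ≤ l) (hln : l ≤ n) (t : ℝ) :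
    l ≤ #{i | t ≤ |x i|} ↔ t ≤ kthMax l x :=
  le_card_filter_iff_le_kthMaxOn x hl (by simpa using hln) t

theorem kthMax_nonneg (x : Fin n → ℝ) (hl : 1 ≤ l) (hln : l ≤ n) : 0 ≤ kthMax l x :=
  (le_card_filter_iff_le_kthMax x hl hln 0).mp (by simpa [abs_nonneg] using hln)

theorem exists_kthMax_le_abs (x : Fin n → ℝ) (hl : 1 ≤ l) (hln : l ≤ n) :
    ∃ i, kthMax l x ≤ |x i| := by
  have := (le_card_filter_iff_le_kthMax x hl hln _).mpr le_rfl
  obtain ⟨i, hi⟩ := card_pos.mp (by omega : 0 < #{i | kthMax l x ≤ |x i|})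
  exact ⟨i, (mem_filter.mp hi).2⟩

theorem measurable_kthMax (hl : 1 ≤ l) (hln : l ≤ n) :
    Measurable (kthMax l : (Fin n → ℝ) → ℝ) := by
  refine measurable_of_Ici fun s => ?_
  have hpre : kthMax l ⁻¹' Set.Ici s = {x : Fin n → ℝ | l ≤ #{i | s ≤ |x i|}} :=
    Set.ext fun x => (le_card_filter_iff_le_kthMax x hl hln s).symm
  rw [hpre]
  simp_rw [card_filter]
  exact measurableSet_le measurable_const <| Finset.measurable_sum _ fun i _ =>
    Measurable.ite (measurableSet_le measurable_const (measurable_pi_apply i).abs)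
      measurable_const measurable_const

end KthMax

theorem MeasureTheory.Integrable.integrableOn_measureReal_le {α : Type*} [MeasurableSpace α]
    {μ : Measure α} {f : α → ℝ} (hf : Integrable f μ) (hnn : 0 ≤ᵐ[μ] f) :
    IntegrableOn (fun t => μ.real {a | t ≤ f a}) (Set.Ioi 0) := by
  have hmeas : Measurable fun t => μ {a | t ≤ f a} :=
    Antitone.measurable fun _ _ hst => measure_mono fun _ h => hst.trans h
  refine ⟨hmeas.ennreal_toReal.aestronglyMeasurable, ?_⟩
  calc ∫⁻ t in Set.Ioi 0, ‖μ.real {a | t ≤ f a}‖ₑ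
      ≤ ∫⁻ t in Set.Ioi 0, μ {a | t ≤ f a} :=
        lintegral_mono fun t => by
          rw [Real.enorm_of_nonneg measureReal_nonneg]
          exact ENNReal.ofReal_toReal_le
    _ = ∫⁻ a, ENNReal.ofReal (f a) ∂μ :=
        (lintegral_eq_lintegral_meas_le μ hnn hf.aemeasurable).symm
    _ < ⊤ := hf.lintegral_lt_top

section KthMaxIntegral

variable {Ω : Type*} [MeasurableSpace Ω] {μ : Measure Ω} {n l : ℕ} {X : Fin n → Ω → ℝ}

theorem integrable_kthMax (hl : 1 ≤ l) (hln : l ≤ n) (hX : ∀ i, Integrable (X i) μ) :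
    Integrable (fun ω => kthMax l fun i => X i ω) μ := by
  refine (integrable_finsetSum univ fun i _ => (hX i).abs).mono'
    ((measurable_kthMax hl hln).comp_aemeasurable
      (aemeasurable_pi_lambda _ fun i => (hX i).aemeasurable)).aestronglyMeasurable
    (ae_of_all _ fun ω => ?_)
  obtain ⟨i, hi⟩ := exists_kthMax_le_abs (fun i => X i ω) hl hln
  rw [Real.norm_of_nonneg (kthMax_nonneg _ hl hln)]
  exact hi.trans (single_le_sum (f := fun i => |X i ω|) (fun _ _ => abs_nonneg _) (mem_univ i))

theorem integral_kthMax_eq (hl : 1 ≤ l) (hln : l ≤ n) (hX : ∀ i, Integrable (X i) μ) :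
    ∫ ω, kthMax l (fun i => X i ω) ∂μ =
      ∫ s in Set.Ioi 0, μ.real {ω | l ≤ #{i | s ≤ |X i ω|}} := by
  simp_rw [le_card_filter_iff_le_kthMax _ hl hln]
  exact (integrable_kthMax hl hln hX).integral_eq_integral_meas_le
    (ae_of_all _ fun ω => kthMax_nonneg _ hl hln)

theorem integrableOn_measureReal_le_card_filter (hl : 1 ≤ l) (hln : l ≤ n)
    (hX : ∀ i, Integrable (X i) μ) :
    IntegrableOn (fun s => μ.real {ω | l ≤ #{i | s ≤ |X i ω|}}) (Set.Ioi 0) := by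
  simp_rw [le_card_filter_iff_le_kthMax _ hl hln]
  exact (integrable_kthMax hl hln hX).integrableOn_measureReal_le
    (ae_of_all _ fun ω => kthMax_nonneg _ hl hln)

end KthMaxIntegral

theorem stmt_2_general {Ω : Type*} [MeasurableSpace Ω] (μ : Measure Ω)
    {n k : ℕ} (hkn : k ≤ n) (X : Fin n → Ω → ℝ)
    (hint : ∀ i, Integrable (X i) μ) :
    ∫ ω, maxKSum k (fun i => X i ω) ∂μ =
      ∫ s in Set.Ioi (0 : ℝ), ∑ l ∈ Finset.Icc 1 k,
        (μ {ω | l ≤ (Finset.univ.filter (fun i => s ≤ |X i ω|)).card}).toReal := by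
  have hl : ∀ l ∈ Icc 1 k, 1 ≤ l ∧ l ≤ n := fun l hl =>
    ⟨(mem_Icc.mp hl).1, (mem_Icc.mp hl).2.trans hkn⟩
  simp_rw [maxKSum_eq_sum_kthMax _ hkn, ← measureReal_def]
  rw [integral_finsetSum _ fun l h => integrable_kthMax (hl l h).1 (hl l h).2 hint,
    integral_finsetSum _ fun l h =>
      integrableOn_measureReal_le_card_filter (hl l h).1 (hl l h).2 hint]
  exact sum_congr rfl fun l h => integral_kthMax_eq (hl l h).1 (hl l h).2 hint

theorem stmt_2 {Ω : Type*} [MeasurableSpace Ω] (μ : Measure Ω) [IsProbabilityMeasure μ]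
    {n k : ℕ} (hk1 : 1 ≤ k) (hkn : k ≤ n) (X : Fin n → Ω → ℝ)
    (hmeas : ∀ i, Measurable (X i)) (hint : ∀ i, Integrable (X i) μ) :
    ∫ ω, maxKSum k (fun i => X i ω) ∂μ =
      ∫ s in Set.Ioi (0 : ℝ), ∑ l ∈ Finset.Icc 1 k,
        (μ {ω | l ≤ (Finset.univ.filter (fun i => s ≤ |X i ω|)).card}).toReal :=
  stmt_2_general μ hkn X hint
end

section
/- Let V be a real symmetric log-concave random variable and t > 0 with P(|V| ≥ t) ≤ 1/4. Then E[|V|·1_{{|V| ≥ t}}] ≤ 4·t·P(|V| ≥ t). -/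
open MeasureTheory Finset Pointwise

/-!
Log-concavity applied to `[n t, ∞)` and `[0, ∞)` (exhausted by compact intervals) with weights
`1/n` and `1 - 1/n` gives `P(V ≥ n t) P(V ≥ 0)^(n-1) ≤ P(V ≥ t)^n`. By symmetry `P(V ≥ 0) ≥ 1/2`
and `P(|V| ≥ s) = 2 P(V ≥ s)`, whence `P(|V| ≥ n t) ≤ q^n` with `q = P(|V| ≥ t)`. On `{|V| ≥ t}`
we have `|V| ≤ 2 t #{n ≥ 1 | n t ≤ |V|}`, so the truncated mean is at most
`2 t ∑_{n ≥ 1} q^n ≤ 4 t q` as soon as `q ≤ 1/2`.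
-/

open Filter Topology
open scoped ENNReal

lemma IsLogConcave.measure_Ici_rpow_mul_rpow_le {ν : Measure ℝ} [IsFiniteMeasure ν]
    (hν : IsLogConcave ν) {c : ℝ} (hc₀ : 0 ≤ c) (hc₁ : c ≤ 1) (a b : ℝ) :
    ν (Set.Ici a) ^ c * ν (Set.Ici b) ^ (1 - c) ≤ ν (Set.Ici (c * a + (1 - c) * b)) := by
  have hlim (a : ℝ) : Tendsto (fun x => ν (Set.Icc a x)) atTop (𝓝 (ν (Set.Ici a))) := by
    rw [← Set.iUnion_Icc_right]
    exact tendsto_measure_iUnion_atTop (antitone_const.Icc monotone_id)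
  have hprod := ENNReal.Tendsto.mul ((hlim a).ennrpow_const c)
    (.inr (ENNReal.rpow_ne_top_of_nonneg (by linarith) (measure_ne_top ν _)))
    ((hlim b).ennrpow_const (1 - c))
    (.inr (ENNReal.rpow_ne_top_of_nonneg hc₀ (measure_ne_top ν _)))
  refine le_of_tendsto hprod ?_
  filter_upwards [eventually_ge_atTop a, eventually_ge_atTop b] with x hax hbx
  refine (hν _ _ c isCompact_Icc isCompact_Icc (Set.nonempty_Icc.2 hax) (Set.nonempty_Icc.2 hbx)
    ⟨hc₀, hc₁⟩).trans (measure_mono ?_)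
  rintro _ ⟨_, ⟨u, hu, rfl⟩, _, ⟨v, hv, rfl⟩, rfl⟩
  simp only [smul_eq_mul, Set.mem_Ici]
  have := mul_le_mul_of_nonneg_left hu.1 hc₀
  have := mul_le_mul_of_nonneg_left hv.1 (sub_nonneg.2 hc₁)
  linarith

lemma IsLogConcave.measure_Ici_mul_mul_pow_le {ν : Measure ℝ} [IsFiniteMeasure ν]
    (hν : IsLogConcave ν) {n : ℕ} (hn : n ≠ 0) (t : ℝ) :
    ν (Set.Ici (n * t)) * ν (Set.Ici 0) ^ (n - 1) ≤ ν (Set.Ici t) ^ n := by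
  have hn' : (0 : ℝ) < n := by positivity
  have h := hν.measure_Ici_rpow_mul_rpow_le (inv_nonneg.2 hn'.le)
    (inv_le_one_of_one_le₀ (by exact_mod_cast Nat.one_le_iff_ne_zero.2 hn)) (n * t) 0
  rw [mul_zero, add_zero, inv_mul_cancel_left₀ hn'.ne'] at h
  have := ENNReal.rpow_le_rpow h hn'.le
  rwa [ENNReal.mul_rpow_of_nonneg _ _ hn'.le, ← ENNReal.rpow_mul, ← ENNReal.rpow_mul,
    inv_mul_cancel₀ hn'.ne', ENNReal.rpow_one, sub_mul, one_mul, inv_mul_cancel₀ hn'.ne',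
    ← Nat.cast_one, ← Nat.cast_sub (Nat.one_le_iff_ne_zero.2 hn), ENNReal.rpow_natCast,
    ENNReal.rpow_natCast] at this

lemma measure_le_abs_eq_two_mul_measure_Ici {ν : Measure ℝ} [ν.IsNegInvariant] {s : ℝ}
    (hs : 0 < s) : ν {x | s ≤ |x|} = 2 * ν (Set.Ici s) := by
  have hset : {x : ℝ | s ≤ |x|} = -Set.Ici s ∪ Set.Ici s := by
    ext x
    simp only [Set.neg_Ici, Set.mem_ofPred_eq, Set.mem_union, Set.mem_Iic, Set.mem_Ici, le_abs,
      le_neg]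
    tauto
  have hdisj : Disjoint (-Set.Ici s) (Set.Ici s) := by
    rw [Set.neg_Ici, Set.Iic_disjoint_Ici]
    linarith
  rw [hset, measure_union hdisj measurableSet_Ici, Measure.measure_neg, two_mul]

lemma one_le_two_mul_measure_Ici_zero {ν : Measure ℝ} [IsProbabilityMeasure ν]
    [ν.IsNegInvariant] : 1 ≤ 2 * ν (Set.Ici 0) := by
  calc 1 = ν (-Set.Ici 0 ∪ Set.Ici 0) := by
        rw [Set.neg_Ici, neg_zero, Set.Iic_union_Ici, measure_univ]
    _ ≤ ν (-Set.Ici 0) + ν (Set.Ici 0) := measure_union_le _ _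
    _ = 2 * ν (Set.Ici 0) := by rw [Measure.measure_neg, two_mul]

lemma IsLogConcave.measure_le_abs_mul_le_pow {ν : Measure ℝ} [IsProbabilityMeasure ν]
    [ν.IsNegInvariant] (hν : IsLogConcave ν) {n : ℕ} (hn : n ≠ 0) {t : ℝ} (ht : 0 < t) :
    ν {x | n * t ≤ |x|} ≤ ν {x | t ≤ |x|} ^ n := by
  obtain ⟨m, rfl⟩ := Nat.exists_eq_succ_of_ne_zero hn
  rw [measure_le_abs_eq_two_mul_measure_Ici ht,
    measure_le_abs_eq_two_mul_measure_Ici (by positivity)]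
  calc 2 * ν (Set.Ici ((m + 1 : ℕ) * t))
      ≤ 2 * ν (Set.Ici ((m + 1 : ℕ) * t)) * (2 * ν (Set.Ici 0)) ^ m :=
        le_mul_of_one_le_right' (one_le_pow_of_one_le' one_le_two_mul_measure_Ici_zero m)
    _ = 2 ^ (m + 1) * (ν (Set.Ici ((m + 1 : ℕ) * t)) * ν (Set.Ici 0) ^ (m + 1 - 1)) := by
        rw [Nat.add_sub_cancel]; ring
    _ ≤ 2 ^ (m + 1) * ν (Set.Ici t) ^ (m + 1) := by
        gcongr; exact hν.measure_Ici_mul_mul_pow_le hn t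
    _ = (2 * ν (Set.Ici t)) ^ (m + 1) := (mul_pow _ _ _).symm

lemma ENNReal.tsum_pow_succ_le_two_mul {q : ℝ≥0∞} (hq : q ≤ 2⁻¹) :
    ∑' n : ℕ, q ^ (n + 1) ≤ 2 * q := by
  simp_rw [pow_succ', ENNReal.tsum_mul_left, ENNReal.tsum_geometric, mul_comm 2 q]
  gcongr
  calc (1 - q)⁻¹ ≤ (1 - 2⁻¹)⁻¹ := by gcongr
    _ = 2 := by rw [ENNReal.one_sub_inv_two, inv_inv]

lemma ofReal_le_two_mul_tsum_indicator {t x : ℝ} (ht : 0 < t) (htx : t ≤ x) :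
    ENNReal.ofReal x ≤
      2 * ENNReal.ofReal t * ∑' n : ℕ, (Set.Ici ((n + 1) * t)).indicator 1 x := by
  set N := ⌊x / t⌋₊
  have hN : 1 ≤ N := Nat.le_floor (by rwa [Nat.cast_one, le_div_iff₀ ht, one_mul])
  have hNx : N * t ≤ x := (le_div_iff₀ ht).1 (Nat.floor_le (div_nonneg (ht.le.trans htx) ht.le))
  have hxN : x < (N + 1) * t := (div_lt_iff₀ ht).1 (Nat.lt_floor_add_one _)
  have hcount : (N : ℝ≥0∞) ≤ ∑' n : ℕ, (Set.Ici ((n + 1) * t)).indicator 1 x := by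
    refine le_of_eq_of_le ?_ (ENNReal.sum_le_tsum (Finset.range N))
    rw [Finset.sum_congr rfl fun n hn => Set.indicator_of_mem (?_ : x ∈ _) _]
    · simp
    · have : (n : ℝ) + 1 ≤ N := by exact_mod_cast Finset.mem_range.1 hn
      exact (mul_le_mul_of_nonneg_right this ht.le).trans hNx
  calc ENNReal.ofReal x ≤ ENNReal.ofReal (2 * t * N) := by
        gcongr
        have : (1 : ℝ) ≤ N := by exact_mod_cast hN
        nlinarith
    _ = 2 * ENNReal.ofReal t * N := by
        rw [ENNReal.ofReal_mul (by positivity), ENNReal.ofReal_mul zero_le_two,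
          ENNReal.ofReal_natCast, ENNReal.ofReal_ofNat]
    _ ≤ _ := by gcongr

lemma setLIntegral_le_two_mul_tsum_measure {Ω : Type*} [MeasurableSpace Ω] (μ : Measure Ω)
    {f : Ω → ℝ} (hf : Measurable f) {t : ℝ} (ht : 0 < t) :
    ∫⁻ ω in {ω | t ≤ f ω}, ENNReal.ofReal (f ω) ∂μ ≤
      2 * ENNReal.ofReal t * ∑' n : ℕ, μ {ω | (n + 1) * t ≤ f ω} := by
  have hind (n : ℕ) :
      Measurable fun ω => (Set.Ici ((n + 1) * t)).indicator (1 : ℝ → ℝ≥0∞) (f ω) :=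
    (measurable_one.indicator measurableSet_Ici).comp hf
  calc ∫⁻ ω in {ω | t ≤ f ω}, ENNReal.ofReal (f ω) ∂μ
      ≤ ∫⁻ ω in {ω | t ≤ f ω}, 2 * ENNReal.ofReal t *
          ∑' n : ℕ, (Set.Ici ((n + 1) * t)).indicator 1 (f ω) ∂μ :=
        setLIntegral_mono ((Measurable.tsum hind).const_mul _)
          fun ω hω => ofReal_le_two_mul_tsum_indicator ht hω
    _ ≤ ∫⁻ ω, 2 * ENNReal.ofReal t *
          ∑' n : ℕ, (Set.Ici ((n + 1) * t)).indicator 1 (f ω) ∂μ :=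
        setLIntegral_le_lintegral _ _
    _ = 2 * ENNReal.ofReal t * ∑' n : ℕ, μ {ω | (n + 1) * t ≤ f ω} := by
        rw [lintegral_const_mul _ (Measurable.tsum hind),
          lintegral_tsum fun n => (hind n).aemeasurable]
        congr 2 with n
        exact lintegral_indicator_one (hf measurableSet_Ici)

theorem stmt_7 {Ω : Type*} [MeasurableSpace Ω] (μ : Measure Ω) [IsProbabilityMeasure μ]
    (V : Ω → ℝ) (hmeas : Measurable V)
    (hsym : μ.map V = μ.map (fun ω => -V ω)) (hlc : IsLogConcave (μ.map V))
    (t : ℝ) (ht : 0 < t) (hp : (μ {ω | t ≤ |V ω|}).toReal ≤ 1 / 4) :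
    ∫ ω in {ω | t ≤ |V ω|}, |V ω| ∂μ ≤ 4 * t * (μ {ω | t ≤ |V ω|}).toReal := by
  have : IsProbabilityMeasure (μ.map V) := Measure.isProbabilityMeasure_map hmeas.aemeasurable
  have : (μ.map V).IsNegInvariant :=
    ⟨by rw [Measure.neg, Measure.map_map measurable_neg hmeas]; exact hsym.symm⟩
  have hmap (s : ℝ) : μ {ω | s ≤ |V ω|} = μ.map V {x | s ≤ |x|} :=
    (Measure.map_apply hmeas (measurableSet_le measurable_const measurable_abs)).symm
  set q := μ {ω | t ≤ |V ω|}
  have htail (n : ℕ) : μ {ω | (n + 1) * t ≤ |V ω|} ≤ q ^ (n + 1) := by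
    rw [hmap, show q = _ from hmap t]
    exact_mod_cast hlc.measure_le_abs_mul_le_pow n.succ_ne_zero ht
  have hq : q ≤ 2⁻¹ := by
    rw [← ENNReal.toReal_le_toReal (measure_ne_top μ _) (by simp)]
    norm_num at hp ⊢
    linarith
  have hlintegral :
      ∫⁻ ω in {ω | t ≤ |V ω|}, ENNReal.ofReal |V ω| ∂μ ≤ 4 * ENNReal.ofReal t * q :=
    calc _ ≤ 2 * ENNReal.ofReal t * ∑' n : ℕ, μ {ω | (n + 1) * t ≤ |V ω|} :=
          setLIntegral_le_two_mul_tsum_measure μ hmeas.abs ht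
      _ ≤ 2 * ENNReal.ofReal t * (2 * q) := by
          gcongr
          exact (ENNReal.tsum_le_tsum htail).trans (ENNReal.tsum_pow_succ_le_two_mul hq)
      _ = 4 * ENNReal.ofReal t * q := by ring
  rw [integral_eq_lintegral_of_nonneg_ae (.of_forall fun _ => abs_nonneg _)
    hmeas.abs.aestronglyMeasurable]
  calc _ ≤ (4 * ENNReal.ofReal t * q).toReal := ENNReal.toReal_mono (by finiteness) hlintegral
    _ = 4 * t * q.toReal := by simp [ENNReal.toReal_mul, ht.le]
end

section
/- Let Y be a mean zero log-concave random variable and t > 0 with P(|Y| ≥ t) ≤ p for some p > 0. Then P(|Y| ≥ t/2) ≥ (1/√(e·p))·P(|Y| ≥ t). -/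
open MeasureTheory Finset Pointwise

/-!
Write `G s = P(Y ≥ s)`. Log-concavity of the law of `Y` gives `G(t) G(0) ≤ G(t/2)²`, and
Grünbaum's inequality `G(0) ≥ 1/e` turns this into `G(t) ≤ e G(t/2)²`; the same holds for `-Y`.
Adding the two sides and using `P(|Y| ≥ t) ≤ p` gives `P(|Y| ≥ t)² ≤ e p P(|Y| ≥ t/2)²`.

For Grünbaum's inequality: `-log G` is convex, so it lies above its tangent line at `0`, whose
mean under the law of `Y` is `-log G(0)` since `E Y = 0`. On the other hand `G(Y)` dominates a
uniform variable (`P(G(Y) ≤ r) ≤ r`), so `E[-log G(Y)] ≤ 1`.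
-/

open Set Filter Topology Real

theorem IsLogConcave.map_neg {E : Type*} [AddCommGroup E] [Module ℝ E] [TopologicalSpace E]
    [ContinuousNeg E] [MeasurableSpace E] [MeasurableNeg E] {ν : Measure E}
    (hν : IsLogConcave ν) : IsLogConcave (ν.map Neg.neg) := by
  intro K L l hK hL hKne hLne hl
  have hmap : ∀ s : Set E, ν.map Neg.neg s = ν (-s) := fun s => (MeasurableEquiv.neg E).map_apply s
  rw [hmap, hmap, hmap, neg_add, ← smul_set_neg, ← smul_set_neg]
  exact hν (-K) (-L) l hK.neg hL.neg hKne.neg hLne.neg hl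

theorem ConvexOn.add_rightDeriv_mul_sub_le {S : Set ℝ} {f : ℝ → ℝ} {x y : ℝ}
    (hf : ConvexOn ℝ S f) (hx : x ∈ interior S) (hy : y ∈ S) :
    f x + derivWithin f (Ioi x) x * (y - x) ≤ f y := by
  rcases lt_trichotomy y x with hyx | rfl | hxy
  · have h := (hf.slope_le_leftDeriv_of_mem_interior hy hx hyx).trans
      (hf.leftDeriv_le_rightDeriv_of_mem_interior hx)
    rw [slope_def_field, div_le_iff₀ (sub_pos.2 hyx)] at h
    linarith
  · simp
  · have h := hf.rightDeriv_le_slope_of_mem_interior hx hy hxy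
    rw [slope_def_field, le_div_iff₀ (sub_pos.2 hxy)] at h
    linarith

section Tails

variable {ν : Measure ℝ}

theorem antitone_measureReal_Ici [IsFiniteMeasure ν] : Antitone fun x => ν.real (Ici x) :=
  fun _ _ hxy => measureReal_mono (Ici_subset_Ici.2 hxy)

theorem IsLogConcave.measure_Ici_rpow_mul_le [IsFiniteMeasure ν] (hν : IsLogConcave ν)
    {l : ℝ} (hl : l ∈ Icc (0 : ℝ) 1) (x y : ℝ) :
    ν (Ici x) ^ l * ν (Ici y) ^ (1 - l) ≤ ν (Ici (l * x + (1 - l) * y)) := by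
  have hlim : ∀ z, Tendsto (fun b => ν (Icc z b)) atTop (𝓝 (ν (Ici z))) := fun z => by
    simpa only [iUnion_Icc_right, Function.comp_def] using
      tendsto_measure_iUnion_atTop (μ := ν) fun _ _ hbc => Icc_subset_Icc_right hbc
  have hrpow : ∀ z (e : ℝ), Tendsto (fun b => ν (Icc z b) ^ e) atTop (𝓝 (ν (Ici z) ^ e)) :=
    fun z _ => (ENNReal.continuous_rpow_const.tendsto _).comp (hlim z)
  refine le_of_tendsto (ENNReal.Tendsto.mul (hrpow x l) ?_ (hrpow y (1 - l)) ?_) ?_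
  · exact Or.inr (ENNReal.rpow_ne_top_of_nonneg (sub_nonneg.2 hl.2) (measure_ne_top _ _))
  · exact Or.inr (ENNReal.rpow_ne_top_of_nonneg hl.1 (measure_ne_top _ _))
  filter_upwards [eventually_ge_atTop (max x y)] with b hb
  refine (hν _ _ l isCompact_Icc isCompact_Icc (nonempty_Icc.2 (le_of_max_le_left hb))
    (nonempty_Icc.2 (le_of_max_le_right hb)) hl).trans (measure_mono ?_)
  rintro _ ⟨_, ⟨u, hu, rfl⟩, _, ⟨v, hv, rfl⟩, rfl⟩
  exact add_le_add (mul_le_mul_of_nonneg_left hu.1 hl.1)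
    (mul_le_mul_of_nonneg_left hv.1 (sub_nonneg.2 hl.2))

theorem IsLogConcave.measureReal_Ici_rpow_mul_le [IsFiniteMeasure ν] (hν : IsLogConcave ν)
    {l : ℝ} (hl : l ∈ Icc (0 : ℝ) 1) (x y : ℝ) :
    ν.real (Ici x) ^ l * ν.real (Ici y) ^ (1 - l) ≤ ν.real (Ici (l * x + (1 - l) * y)) := by
  simpa only [measureReal_def, ENNReal.toReal_mul, ENNReal.toReal_rpow] using
    ENNReal.toReal_mono (measure_ne_top _ _) (hν.measure_Ici_rpow_mul_le hl x y)

theorem IsLogConcave.convexOn_neg_log_measureReal_Ici [IsFiniteMeasure ν] (hν : IsLogConcave ν) :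
    ConvexOn ℝ {x | 0 < ν.real (Ici x)} fun x => -log (ν.real (Ici x)) := by
  have hmix : ∀ ⦃x y l : ℝ⦄, 0 < ν.real (Ici x) → 0 < ν.real (Ici y) → l ∈ Icc (0 : ℝ) 1 →
      l * log (ν.real (Ici x)) + (1 - l) * log (ν.real (Ici y)) ≤
        log (ν.real (Ici (l * x + (1 - l) * y))) := by
    intro x y l hx hy hl
    rw [← log_rpow hx, ← log_rpow hy, ← log_mul (rpow_pos_of_pos hx _).ne'
      (rpow_pos_of_pos hy _).ne']
    exact log_le_log (mul_pos (rpow_pos_of_pos hx _) (rpow_pos_of_pos hy _))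
      (hν.measureReal_Ici_rpow_mul_le hl x y)
  refine ⟨fun x hx y hy a b ha hb hab => ?_, fun x hx y hy a b ha hb hab => ?_⟩
  · obtain rfl : b = 1 - a := by linarith
    exact (mul_pos (rpow_pos_of_pos hx a) (rpow_pos_of_pos hy _)).trans_le
      (hν.measureReal_Ici_rpow_mul_le ⟨ha, by linarith⟩ x y)
  · obtain rfl : b = 1 - a := by linarith
    simp only [smul_eq_mul]
    linarith [hmix hx hy ⟨ha, by linarith⟩]

variable (ν : Measure ℝ)

-- A compact `K` inside the set lies in `Ici (sInf K)`, and `sInf K` belongs to the set.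
theorem measure_setOf_measure_Ici_le [IsFiniteMeasure ν] (r : ENNReal) :
    ν {x | ν (Ici x) ≤ r} ≤ r := by
  have hanti : Antitone fun x => ν (Ici x) := fun _ _ hxy => measure_mono (Ici_subset_Ici.2 hxy)
  by_contra! hr
  obtain ⟨K, hKS, hK, hrK⟩ :=
    (measurableSet_le hanti.measurable measurable_const).exists_lt_isCompact hr
  have hKmin := hKS (hK.sInf_mem (nonempty_of_measure_ne_zero (ne_bot_of_gt hrK)))
  exact (hrK.trans_le ((measure_mono fun z hz => csInf_le hK.bddBelow hz).trans hKmin)).false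

theorem ae_pos_measureReal_Ici [IsFiniteMeasure ν] : ∀ᵐ x ∂ν, 0 < ν.real (Ici x) := by
  refine ae_iff.2 (measure_mono_null (fun x (hx : ¬0 < _) => ?_)
    (le_zero_iff.1 (measure_setOf_measure_Ici_le ν 0)))
  exact ((measureReal_eq_zero_iff).1 (le_antisymm (not_lt.1 hx) measureReal_nonneg)).le

theorem neg_log_measureReal_Ici_nonneg [IsProbabilityMeasure ν] (x : ℝ) :
    0 ≤ -log (ν.real (Ici x)) :=
  neg_nonneg.2 (log_nonpos measureReal_nonneg measureReal_le_one)

theorem lintegral_neg_log_measureReal_Ici_le_one [IsProbabilityMeasure ν] :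
    ∫⁻ x, ENNReal.ofReal (-log (ν.real (Ici x))) ∂ν ≤ 1 := by
  rw [lintegral_eq_lintegral_meas_lt ν (ae_of_all _ (neg_log_measureReal_Ici_nonneg ν))
    antitone_measureReal_Ici.measurable.log.neg.aemeasurable]
  calc ∫⁻ t in Ioi 0, ν {x | t < -log (ν.real (Ici x))}
      ≤ ∫⁻ t in Ioi 0, ENNReal.ofReal (exp (-t)) := by
        refine setLIntegral_mono' measurableSet_Ioi fun t ht => ?_
        refine (measure_mono fun x (hx : t < _) => ?_).trans (measure_setOf_measure_Ici_le ν _)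
        have hpos : 0 < ν.real (Ici x) := by
          by_contra! h
          rw [le_antisymm h measureReal_nonneg, log_zero, neg_zero] at hx
          exact (lt_asymm ht hx).elim
        rw [mem_ofPred_eq, ← ofReal_measureReal]
        exact ENNReal.ofReal_le_ofReal ((log_lt_iff_lt_exp hpos).1 (by linarith)).le
    _ = 1 := by
        rw [← ofReal_integral_eq_lintegral_ofReal (integrableOn_exp_neg_Ioi 0)
          (ae_of_all _ fun t => (exp_pos _).le), integral_exp_neg_Ioi_zero, ENNReal.ofReal_one]

theorem integrable_neg_log_measureReal_Ici [IsProbabilityMeasure ν] :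
    Integrable (fun x => -log (ν.real (Ici x))) ν :=
  ⟨antitone_measureReal_Ici.measurable.log.neg.aestronglyMeasurable,
    (hasFiniteIntegral_iff_ofReal (ae_of_all _ (neg_log_measureReal_Ici_nonneg ν))).2
      ((lintegral_neg_log_measureReal_Ici_le_one ν).trans_lt ENNReal.one_lt_top)⟩

theorem integral_neg_log_measureReal_Ici_le_one [IsProbabilityMeasure ν] :
    ∫ x, -log (ν.real (Ici x)) ∂ν ≤ 1 := by
  rw [← ENNReal.ofReal_le_one, ofReal_integral_eq_lintegral_ofReal
    (integrable_neg_log_measureReal_Ici ν) (ae_of_all _ (neg_log_measureReal_Ici_nonneg ν))]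
  exact lintegral_neg_log_measureReal_Ici_le_one ν

variable {ν}

theorem measure_Iio_eq_zero_of_integral_eq_zero (hint : Integrable (fun x => x) ν)
    (hmean : ∫ x, x ∂ν = 0) (hpos : ν (Ioi 0) = 0) : ν (Iio 0) = 0 := by
  have hnonpos : ∀ᵐ x ∂ν, 0 ≤ -x :=
    measure_eq_zero_iff_ae_notMem.1 hpos |>.mono fun x hx => by simpa using hx
  have hzero := (integral_eq_zero_iff_of_nonneg_ae hnonpos hint.neg).1
    (by rw [integral_neg, hmean, neg_zero])
  refine measure_eq_zero_iff_ae_notMem.2 (hzero.mono fun x hx => ?_)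
  simp_all

theorem IsLogConcave.exp_neg_one_le_measureReal_Ici_zero [IsProbabilityMeasure ν]
    (hν : IsLogConcave ν) (hint : Integrable (fun x => x) ν) (hmean : ∫ x, x ∂ν = 0) :
    exp (-1) ≤ ν.real (Ici 0) := by
  have hae := ae_pos_measureReal_Ici ν
  by_cases hpos : ∃ s > 0, 0 < ν.real (Ici s)
  swap
  · push Not at hpos
    have hIoi : ν (Ioi 0) = 0 :=
      measure_mono_null (fun x hx => (hpos x hx).not_gt) (ae_iff.1 hae)
    rw [← compl_Iio, measureReal_compl measurableSet_Iio]
    simp [measureReal_def, measure_Iio_eq_zero_of_integral_eq_zero hint hmean hIoi]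
  obtain ⟨s, hs, hGs⟩ := hpos
  have h0 : (0 : ℝ) ∈ interior {x | 0 < ν.real (Ici x)} :=
    mem_interior_iff_mem_nhds.2 <| mem_of_superset (Iic_mem_nhds hs) fun x hx =>
      hGs.trans_le (antitone_measureReal_Ici hx)
  set r := derivWithin (fun x => -log (ν.real (Ici x))) (Ioi 0) 0
  have htangent : ∀ᵐ x ∂ν, -log (ν.real (Ici 0)) + r * x ≤ -log (ν.real (Ici x)) :=
    hae.mono fun x hx => by
      simpa using hν.convexOn_neg_log_measureReal_Ici.add_rightDeriv_mul_sub_le h0 hx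
  have hlog : -log (ν.real (Ici 0)) ≤ 1 := calc
    -log (ν.real (Ici 0)) = ∫ x, (-log (ν.real (Ici 0)) + r * x) ∂ν := by
      rw [integral_add (integrable_const _) (hint.const_mul r), integral_const_mul, hmean]
      simp
    _ ≤ ∫ x, -log (ν.real (Ici x)) ∂ν :=
      integral_mono_ae ((integrable_const _).add (hint.const_mul r))
        (integrable_neg_log_measureReal_Ici ν) htangent
    _ ≤ 1 := integral_neg_log_measureReal_Ici_le_one ν
  rw [← le_log_iff_exp_le (hGs.trans_le (antitone_measureReal_Ici hs.le))]
  linarith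

theorem IsLogConcave.measureReal_Ici_le_exp_one_mul_sq [IsProbabilityMeasure ν]
    (hν : IsLogConcave ν) (hint : Integrable (fun x => x) ν) (hmean : ∫ x, x ∂ν = 0) (t : ℝ) :
    ν.real (Ici t) ≤ exp 1 * ν.real (Ici (t / 2)) ^ 2 := by
  have hmid : sqrt (ν.real (Ici t)) * sqrt (ν.real (Ici 0)) ≤ ν.real (Ici (t / 2)) := by
    have h := hν.measureReal_Ici_rpow_mul_le (l := 1 / 2) ⟨by norm_num, by norm_num⟩ t 0
    rwa [show (1 : ℝ) - 1 / 2 = 1 / 2 by norm_num, show 1 / 2 * t + 1 / 2 * 0 = t / 2 by ring,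
      ← sqrt_eq_rpow, ← sqrt_eq_rpow] at h
  have hsq : ν.real (Ici t) * ν.real (Ici 0) ≤ ν.real (Ici (t / 2)) ^ 2 := by
    simpa [mul_pow, sq_sqrt measureReal_nonneg] using
      pow_le_pow_left₀ (by positivity) hmid 2
  have hgrunbaum := hν.exp_neg_one_le_measureReal_Ici_zero hint hmean
  calc ν.real (Ici t) = exp 1 * (ν.real (Ici t) * exp (-1)) := by
        rw [mul_left_comm, ← exp_add, add_neg_cancel, exp_zero, mul_one]
    _ ≤ exp 1 * ν.real (Ici (t / 2)) ^ 2 := by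
        gcongr
        exact (mul_le_mul_of_nonneg_left hgrunbaum measureReal_nonneg).trans hsq

theorem IsLogConcave.measureReal_map_neg_Ici_le_exp_one_mul_sq [IsProbabilityMeasure ν]
    (hν : IsLogConcave ν) (hint : Integrable (fun x => x) ν) (hmean : ∫ x, x ∂ν = 0) (t : ℝ) :
    (ν.map Neg.neg).real (Ici t) ≤ exp 1 * (ν.map Neg.neg).real (Ici (t / 2)) ^ 2 := by
  have := Measure.isProbabilityMeasure_map (μ := ν) measurable_neg.aemeasurable
  refine hν.map_neg.measureReal_Ici_le_exp_one_mul_sq ?_ ?_ t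
  · exact (integrable_map_measure aestronglyMeasurable_id measurable_neg.aemeasurable).2 hint.neg
  · rw [integral_map measurable_neg.aemeasurable measurable_id'.aestronglyMeasurable,
      integral_neg, hmean, neg_zero]

theorem measureReal_le_abs_eq_add [IsFiniteMeasure ν] {t : ℝ} (ht : 0 < t) :
    ν.real {x | t ≤ |x|} = ν.real (Ici t) + (ν.map Neg.neg).real (Ici t) := by
  have hunion : {x | t ≤ |x|} = Ici t ∪ Neg.neg ⁻¹' Ici t := by
    ext x
    simp [le_abs, le_neg]
  rw [map_measureReal_apply measurable_neg measurableSet_Ici, hunion,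
    measureReal_union (s₁ := Ici t) (disjoint_left.2 fun x hx hx' => by
      simp_all only [Set.mem_Ici, Set.mem_preimage]; linarith)
      (measurableSet_Ici.preimage measurable_neg)]

end Tails

theorem one_div_sqrt_mul_mul_le_add {A B a b c p : ℝ} (hA : 0 ≤ A) (hB : 0 ≤ B) (ha : 0 ≤ a)
    (hb : 0 ≤ b) (hc : 0 ≤ c) (hAa : A ≤ c * a ^ 2) (hBb : B ≤ c * b ^ 2) (hp : A + B ≤ p) :
    1 / sqrt (c * p) * (A + B) ≤ a + b := by
  have hsq : (A + B) ^ 2 ≤ (sqrt (c * p) * (a + b)) ^ 2 := by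
    rw [mul_pow, sq_sqrt (mul_nonneg hc (by linarith))]
    nlinarith [mul_nonneg ha hb, mul_nonneg hc (mul_nonneg ha hb)]
  have hle : A + B ≤ sqrt (c * p) * (a + b) :=
    (pow_le_pow_iff_left₀ (by positivity) (by positivity) two_ne_zero).1 hsq
  rw [one_div_mul_eq_div]
  exact div_le_of_le_mul₀ (sqrt_nonneg _) (by positivity) (by rwa [mul_comm])

theorem stmt_8_general {Ω : Type*} [MeasurableSpace Ω] (μ : Measure Ω) [IsProbabilityMeasure μ]
    (Y : Ω → ℝ) (hint : Integrable Y μ)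
    (hmean : ∫ ω, Y ω ∂μ = 0) (hlc : IsLogConcave (μ.map Y))
    (t p : ℝ) (ht : 0 < t)
    (h : (μ {ω | t ≤ |Y ω|}).toReal ≤ p) :
    (1 / Real.sqrt (Real.exp 1 * p)) * (μ {ω | t ≤ |Y ω|}).toReal ≤
      (μ {ω | t / 2 ≤ |Y ω|}).toReal := by
  have hY := hint.aemeasurable
  have := Measure.isProbabilityMeasure_map hY
  have hν_int : Integrable (fun x => x) (μ.map Y) :=
    (integrable_map_measure aestronglyMeasurable_id hY).2 hint
  have hν_mean : ∫ x, x ∂μ.map Y = 0 := by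
    rwa [integral_map hY measurable_id'.aestronglyMeasurable]
  have habs : ∀ r, (μ {ω | r ≤ |Y ω|}).toReal = (μ.map Y).real {x | r ≤ |x|} := fun r => by
    rw [map_measureReal_apply_of_aemeasurable hY (measurableSet_le measurable_const measurable_abs)]
    rfl
  rw [habs, measureReal_le_abs_eq_add ht] at h ⊢
  rw [habs, measureReal_le_abs_eq_add (half_pos ht)]
  exact one_div_sqrt_mul_mul_le_add measureReal_nonneg measureReal_nonneg measureReal_nonneg
    measureReal_nonneg (exp_pos 1).le (hlc.measureReal_Ici_le_exp_one_mul_sq hν_int hν_mean t)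
    (hlc.measureReal_map_neg_Ici_le_exp_one_mul_sq hν_int hν_mean t) h

theorem stmt_8 {Ω : Type*} [MeasurableSpace Ω] (μ : Measure Ω) [IsProbabilityMeasure μ]
    (Y : Ω → ℝ) (hmeas : Measurable Y) (hint : Integrable Y μ)
    (hmean : ∫ ω, Y ω ∂μ = 0) (hlc : IsLogConcave (μ.map Y))
    (t p : ℝ) (ht : 0 < t) (hp : 0 < p)
    (h : (μ {ω | t ≤ |Y ω|}).toReal ≤ p) :
    (1 / Real.sqrt (Real.exp 1 * p)) * (μ {ω | t ≤ |Y ω|}).toReal ≤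
      (μ {ω | t / 2 ≤ |Y ω|}).toReal :=
  stmt_8_general μ Y hint hmean hlc t p ht h
end

section
/- Let X be an unconditional log-concave random vector in R^n (the law of (ε_1 X_1,...,ε_n X_n) equals that of X for all sign choices ε_i ∈ {−1,1}). Then for any 1 ≤ k ≤ n, u > 1 and t > 0: P(k-max_{i≤n}|X_i| ≥ u·t) ≤ P(k-max_{i≤n}|X_i| ≥ t)^u, where k-max denotes the k-th largest value. -/
/-!
Let `ν` be the law of `X` and `Q = ℝ₊ⁿ`. A log-concave measure charging `{0 < x i}` gives no mass
to the hyperplane `{x i = 0}` (compare `{0 ≤ x i}` with `{0 < x i}` through their midpoint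
combination), so almost surely the set of vanishing coordinates is fixed. Unconditionality then
makes `ν` split evenly over the orthants: on sets depending only on `|x|` it agrees with
`c • ν.restrict Q` for a constant `c`, i.e. the law of `|X|` is the log-concave measure
`c • ν.restrict Q`. Finally, with `A s = {x | s ≤ kthMax k x}`,
`u⁻¹ • (A (u * t) ∩ Q) + (1 - u⁻¹) • Q ⊆ A t`, so log-concavity yields
`ν (A (u * t)) ^ u⁻¹ * 1 ≤ ν (A t)`.
-/

open MeasureTheory Finset Pointwise

lemma le_card_filter_univ_iff {ι : Type*} [Fintype ι] {p : ι → Prop} [DecidablePred p] {k : ℕ} :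
    k ≤ #(univ.filter p) ↔ ∃ I : Finset ι, I.card = k ∧ ∀ i ∈ I, p i := by
  rw [le_card_iff_exists_subset_card]
  refine ⟨fun ⟨I, hI, hk⟩ => ⟨I, hk, fun i hi => (mem_filter.1 (hI hi)).2⟩,
    fun ⟨I, hk, hp⟩ => ⟨I, fun i hi => mem_filter.2 ⟨mem_univ i, hp i hi⟩, hk⟩⟩

lemma setOf_le_card_filter_univ_eq_iUnion {α ι : Type*} [Fintype ι] (p : α → ι → Prop)
    [∀ a, DecidablePred (p a)] (k : ℕ) :
    {a | k ≤ #(univ.filter (p a))} = ⋃ (I : Finset ι) (_ : I.card = k), ⋂ i ∈ I, {a | p a i} := by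
  ext a
  simp [le_card_filter_univ_iff]

lemma isClosed_setOf_le_card_filter {ι : Type*} [Fintype ι] (a : ι → ℝ) (k : ℕ) :
    IsClosed {t : ℝ | k ≤ #(univ.filter fun i => t ≤ a i)} := by
  rw [setOf_le_card_filter_univ_eq_iUnion]
  exact isClosed_iUnion_of_finite fun I => isClosed_iUnion_of_finite fun _ =>
    isClosed_biInter fun i _ => isClosed_Iic

lemma le_kthMax_iff {n k : ℕ} (hk1 : 1 ≤ k) (hkn : k ≤ n) (x : Fin n → ℝ) (s : ℝ) :
    s ≤ kthMax k x ↔ k ≤ #(univ.filter fun i => s ≤ |x i|) := by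
  set S := {t : ℝ | k ≤ #(univ.filter fun i => t ≤ |x i|)}
  have hS0 : (0 : ℝ) ∈ S := by simpa [S] using hkn
  have hSbdd : BddAbove S := by
    refine ⟨∑ i, |x i|, fun t ht => ?_⟩
    obtain ⟨i, hi⟩ : (univ.filter fun i => t ≤ |x i|).Nonempty :=
      card_pos.1 (Nat.lt_of_lt_of_le hk1 ht)
    exact (mem_filter.1 hi).2.trans (single_le_sum (fun j _ => abs_nonneg (x j)) (mem_univ i))
  refine ⟨fun hs => ?_, fun hs => le_csSup hSbdd hs⟩
  have hmem : kthMax k x ∈ S := (isClosed_setOf_le_card_filter (|x ·|) k).csSup_mem ⟨0, hS0⟩ hSbdd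
  exact hmem.trans (card_le_card (monotone_filter_right _ fun i _ hi => hs.trans hi))

lemma measurableSet_le_kthMax {n k : ℕ} (hk1 : 1 ≤ k) (hkn : k ≤ n) (s : ℝ) :
    MeasurableSet {x : Fin n → ℝ | s ≤ kthMax k x} := by
  simp_rw [le_kthMax_iff hk1 hkn]
  rw [setOf_le_card_filter_univ_eq_iUnion]
  exact .iUnion fun I => .iUnion fun _ => .biInter I.countable_toSet fun i _ =>
    measurableSet_le measurable_const (measurable_pi_apply i).abs

open scoped ENNReal

namespace IsLogConcave

variable {E : Type*} [AddCommGroup E] [Module ℝ E] [TopologicalSpace E] [MeasurableSpace E]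
  {ν : Measure E}

lemma rpow_mul_rpow_le [ν.InnerRegular] (hν : IsLogConcave ν) {A B S : Set E}
    (hA : MeasurableSet A) (hB : MeasurableSet B) {l : ℝ} (hl : l ∈ Set.Ioo 0 1)
    (hABS : l • A + (1 - l) • B ⊆ S) :
    ν A ^ l * ν B ^ (1 - l) ≤ ν S := by
  have hl' : 0 < 1 - l := sub_pos.2 hl.2
  rw [hA.measure_eq_iSup_isCompact, hB.measure_eq_iSup_isCompact,
    ← ENNReal.orderIsoRpow_apply l hl.1, ← ENNReal.orderIsoRpow_apply (1 - l) hl']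
  simp only [OrderIso.map_iSup, ENNReal.iSup_mul, ENNReal.mul_iSup, iSup_le_iff,
    ENNReal.orderIsoRpow_apply]
  intro L hLB hL K hKA hK
  rcases K.eq_empty_or_nonempty with rfl | hKne
  · simp [ENNReal.zero_rpow_of_pos hl.1]
  rcases L.eq_empty_or_nonempty with rfl | hLne
  · simp [ENNReal.zero_rpow_of_pos hl']
  exact (hν K L l hK hL hKne hLne (Set.Ioo_subset_Icc_self hl)).trans
    (measure_mono ((Set.add_subset_add (Set.smul_set_mono hKA) (Set.smul_set_mono hLB)).trans hABS))

lemma measure_setOf_eq_zero [ν.InnerRegular] [IsFiniteMeasure ν] (hν : IsLogConcave ν)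
    {f : E →ₗ[ℝ] ℝ} (hf : Measurable f) (hpos : ν {x | 0 < f x} ≠ 0) :
    ν {x | f x = 0} = 0 := by
  set A := {x | 0 ≤ f x}
  set B := {x | 0 < f x}
  have hA : MeasurableSet A := measurableSet_le measurable_const hf
  have hB : MeasurableSet B := measurableSet_lt measurable_const hf
  have hl : (2⁻¹ : ℝ) ∈ Set.Ioo 0 1 := by norm_num
  have hAB : (2⁻¹ : ℝ) • A + (1 - 2⁻¹ : ℝ) • B ⊆ B := by
    rintro _ ⟨_, ⟨a, ha, rfl⟩, _, ⟨b, hb, rfl⟩, rfl⟩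
    simp only [B, Set.mem_ofPred_eq, map_add, map_smul, smul_eq_mul]
    have : 0 ≤ f a := ha
    have : 0 < f b := hb
    positivity
  have hBA : B ⊆ A := fun x (hx : 0 < f x) => hx.le
  -- `ν A ^ 2⁻¹ * ν B ^ 2⁻¹ ≤ ν B = ν B ^ 2⁻¹ * ν B ^ 2⁻¹`, and `0 < ν B < ∞` lets us cancel
  have hle : ν A ≤ ν B := by
    have h := hν.rpow_mul_rpow_le hA hB hl hAB
    conv_rhs at h => rw [← ENNReal.rpow_one (ν B), ← add_sub_cancel (2⁻¹ : ℝ) 1,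
      ENNReal.rpow_add_of_nonneg _ _ (by norm_num) (by norm_num)]
    rwa [ENNReal.mul_le_mul_iff_left
      (ENNReal.rpow_pos (pos_iff_ne_zero.2 hpos) (measure_ne_top ν B)).ne'
      (ENNReal.rpow_ne_top_of_nonneg (by norm_num) (measure_ne_top ν B)),
      ENNReal.rpow_le_rpow_iff (by norm_num)] at h
  have hdiff : A \ B = {x | f x = 0} := by
    ext x
    simp only [A, B, Set.mem_sdiff, Set.mem_ofPred_eq, not_lt, le_antisymm_iff, and_comm]
  rw [← hdiff, measure_sdiff hBA hB.nullMeasurableSet (measure_ne_top ν B), tsub_eq_zero_of_le hle]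

lemma smul_restrict_rpow_mul_rpow_le [ν.InnerRegular] (hν : IsLogConcave ν) {Q : Set E}
    (hQ : Convex ℝ Q) (hQm : MeasurableSet Q) (c : ℝ≥0∞) {A B S : Set E}
    (hA : MeasurableSet A) (hB : MeasurableSet B) {l : ℝ}
    (hl : l ∈ Set.Ioo 0 1) (hABS : l • (A ∩ Q) + (1 - l) • (B ∩ Q) ⊆ S) :
    (c • ν.restrict Q) A ^ l * (c • ν.restrict Q) B ^ (1 - l) ≤ (c • ν.restrict Q) S := by
  have hQQ : l • (A ∩ Q) + (1 - l) • (B ∩ Q) ⊆ Q :=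
    (Set.add_subset_add (Set.smul_set_mono Set.inter_subset_right)
      (Set.smul_set_mono Set.inter_subset_right)).trans
      (convex_iff_pointwise_add_subset.1 hQ hl.1.le (sub_pos.2 hl.2).le (add_sub_cancel l 1))
  have h := hν.rpow_mul_rpow_le (hA.inter hQm) (hB.inter hQm) hl (Set.subset_inter hABS hQQ)
  have hc : c ^ l * c ^ (1 - l) = c := by
    rw [← ENNReal.rpow_add_of_nonneg _ _ hl.1.le (sub_pos.2 hl.2).le, add_sub_cancel,
      ENNReal.rpow_one]
  simp only [Measure.smul_apply, smul_eq_mul, Measure.restrict_apply' hQm,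
    ENNReal.mul_rpow_of_nonneg _ _ hl.1.le, ENNReal.mul_rpow_of_nonneg _ _ (sub_pos.2 hl.2).le]
  calc c ^ l * ν (A ∩ Q) ^ l * (c ^ (1 - l) * ν (B ∩ Q) ^ (1 - l))
      = c ^ l * c ^ (1 - l) * (ν (A ∩ Q) ^ l * ν (B ∩ Q) ^ (1 - l)) := by ring
    _ = c * (ν (A ∩ Q) ^ l * ν (B ∩ Q) ^ (1 - l)) := by rw [hc]
    _ ≤ c * ν (S ∩ Q) := by gcongr

lemma measure_setOf_apply_eq_zero_or {ι : Type*} {ν : Measure (ι → ℝ)} [ν.InnerRegular]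
    [IsFiniteMeasure ν] (hν : IsLogConcave ν) (i : ι) :
    ν {x | x i = 0} = 0 ∨ ν {x | x i ≠ 0} = 0 := by
  refine or_iff_not_imp_right.2 fun hne => ?_
  by_cases hpos : ν {x | 0 < x i} = 0
  · have hneg : ν {x | 0 < -x i} ≠ 0 := fun hneg => hne <| measure_mono_null
      (fun x (hx : x i ≠ 0) => hx.lt_or_gt.elim (fun h => Or.inr (neg_pos.2 h)) Or.inl)
      (measure_union_null hpos hneg)
    simpa using hν.measure_setOf_eq_zero (f := -LinearMap.proj i) (measurable_pi_apply i).neg hneg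
  · exact hν.measure_setOf_eq_zero (f := LinearMap.proj i) (measurable_pi_apply i) hpos

end IsLogConcave

def IsUnconditional {ι : Type*} (ν : Measure (ι → ℝ)) : Prop :=
  ∀ ε : ι → ℝ, (∀ i, ε i = 1 ∨ ε i = -1) → ν.map (ε * ·) = ν

def flipSign {ι : Type*} [DecidableEq ι] (i : ι) : ι → ℝ := Function.update 1 i (-1)

lemma flipSign_eq_one_or {ι : Type*} [DecidableEq ι] (i j : ι) :
    flipSign i j = 1 ∨ flipSign i j = -1 := by
  rcases eq_or_ne j i with rfl | hj <;> simp [flipSign, *]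

namespace IsUnconditional

variable {ι : Type*} {ν : Measure (ι → ℝ)}

lemma measure_preimage_mul (hν : IsUnconditional ν) {ε : ι → ℝ} (hε : ∀ i, ε i = 1 ∨ ε i = -1)
    {C : Set (ι → ℝ)} (hC : MeasurableSet C) : ν ((ε * ·) ⁻¹' C) = ν C := by
  conv_rhs => rw [← hν ε hε]
  exact (Measure.map_apply (measurable_const.mul measurable_id) hC).symm

lemma exists_measure_eq_mul_measure_inter_nonneg [DecidableEq ι] (hν : IsUnconditional ν) (i : ι)
    (hi : ν {x | x i = 0} = 0 ∨ ν {x | x i ≠ 0} = 0) :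
    ∃ c : ℝ≥0∞, ∀ C : Set (ι → ℝ), MeasurableSet C → (flipSign i * ·) ⁻¹' C = C →
      ν C = c * ν (C ∩ {x | 0 ≤ x i}) := by
  have hHi : MeasurableSet {x : ι → ℝ | 0 ≤ x i} :=
    measurableSet_le measurable_const (measurable_pi_apply i)
  rcases hi with hzero | hnonzero
  · refine ⟨2, fun C hC hCi => ?_⟩
    have hneg : C \ {x | 0 ≤ x i} = (flipSign i * ·) ⁻¹' (C ∩ {x | 0 < x i}) := by
      rw [Set.preimage_inter, hCi]
      ext x
      simp [flipSign]
    have hpos : C ∩ {x | 0 < x i} = (C ∩ {x | 0 ≤ x i}) \ {x | x i = 0} := by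
      ext x
      simp [lt_iff_le_and_ne, eq_comm, and_assoc]
    rw [← measure_inter_add_sdiff C hHi, hneg, hν.measure_preimage_mul (flipSign_eq_one_or i)
      (hC.inter (measurableSet_lt measurable_const (measurable_pi_apply i))), hpos,
      measure_sdiff_null hzero, two_mul]
  · refine ⟨1, fun C _ _ => ?_⟩
    rw [one_mul, measure_inter_conull (measure_mono_null (fun x hx => ?_) hnonzero)]
    simp only [Set.mem_compl_iff, Set.mem_ofPred_eq, not_le] at hx ⊢
    exact hx.ne

lemma exists_measure_eq_mul_measure_inter_Ici [Fintype ι] [DecidableEq ι]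
    (hν : IsUnconditional ν) (hi : ∀ i, ν {x | x i = 0} = 0 ∨ ν {x | x i ≠ 0} = 0) :
    ∃ c : ℝ≥0∞, ∀ C : Set (ι → ℝ), MeasurableSet C → (∀ i, (flipSign i * ·) ⁻¹' C = C) →
      ν C = c * ν (C ∩ Set.Ici 0) := by
  suffices h : ∀ J : Finset ι, ∃ c : ℝ≥0∞, ∀ C : Set (ι → ℝ), MeasurableSet C →
      (∀ i, (flipSign i * ·) ⁻¹' C = C) → ν C = c * ν (C ∩ ⋂ j ∈ J, {x | 0 ≤ x j}) by
    obtain ⟨c, hc⟩ := h univ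
    have hIci : Set.Ici (0 : ι → ℝ) = ⋂ j ∈ univ, {x | 0 ≤ x j} := by
      ext x
      simp [Pi.le_def]
    exact ⟨c, hIci ▸ hc⟩
  intro J
  induction J using Finset.induction_on with
  | empty => exact ⟨1, fun C _ _ => by simp⟩
  | insert a J haJ ih =>
    obtain ⟨c, hc⟩ := ih
    obtain ⟨c', hc'⟩ := hν.exists_measure_eq_mul_measure_inter_nonneg a (hi a)
    refine ⟨c * c', fun C hC hCi => ?_⟩
    have hQJ : MeasurableSet (⋂ j ∈ J, {x : ι → ℝ | 0 ≤ x j}) :=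
      .biInter J.countable_toSet fun j _ =>
        measurableSet_le measurable_const (measurable_pi_apply j)
    have hflip : (flipSign a * ·) ⁻¹' (C ∩ ⋂ j ∈ J, {x | 0 ≤ x j}) =
        C ∩ ⋂ j ∈ J, {x | 0 ≤ x j} := by
      rw [Set.preimage_inter, hCi a]
      congr 1
      ext x
      simp only [Set.mem_preimage, Set.mem_iInter, Set.mem_ofPred_eq, Pi.mul_apply]
      refine forall₂_congr fun j hj => ?_
      rw [flipSign, Function.update_of_ne (ne_of_mem_of_not_mem hj haJ), Pi.one_apply, one_mul]
    rw [hc C hC hCi, hc' _ (hC.inter hQJ) hflip, mul_assoc, Finset.set_biInter_insert,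
      Set.inter_assoc, Set.inter_comm {x : ι → ℝ | 0 ≤ x a}]

end IsUnconditional

lemma kthMax_mul_of_sign {n : ℕ} (k : ℕ) {ε : Fin n → ℝ} (hε : ∀ i, ε i = 1 ∨ ε i = -1)
    (x : Fin n → ℝ) : kthMax k (ε * x) = kthMax k x := by
  have h : ∀ i, |ε i * x i| = |x i| := fun i => by rcases hε i with h | h <;> simp [h]
  simp only [kthMax, Pi.mul_apply, h]

lemma inv_smul_add_smul_Ici_subset_setOf_le_kthMax {n k : ℕ} (hk1 : 1 ≤ k) (hkn : k ≤ n)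
    {u : ℝ} (hu : 1 ≤ u) (t : ℝ) :
    u⁻¹ • ({x : Fin n → ℝ | u * t ≤ kthMax k x} ∩ Set.Ici 0) + (1 - u⁻¹) • Set.Ici 0 ⊆
      {x | t ≤ kthMax k x} := by
  rintro _ ⟨_, ⟨x, ⟨hx, hx0⟩, rfl⟩, _, ⟨y, hy0, rfl⟩, rfl⟩
  simp only [Set.mem_ofPred_eq, le_kthMax_iff hk1 hkn] at hx ⊢
  refine hx.trans (card_le_card (monotone_filter_right _ fun i _ hi => ?_))
  rw [abs_of_nonneg (hx0 i)] at hi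
  have hxi : t ≤ u⁻¹ * x i := by rwa [le_inv_mul_iff₀ (by linarith)]
  have hyi : 0 ≤ (1 - u⁻¹) * y i := mul_nonneg (sub_nonneg.2 (inv_le_one_of_one_le₀ hu)) (hy0 i)
  simp only [Pi.add_apply, Pi.smul_apply, smul_eq_mul]
  exact (le_add_of_le_of_nonneg hxi hyi).trans (le_abs_self _)

theorem stmt_11 {Ω : Type*} [MeasurableSpace Ω] (μ : Measure Ω) [IsProbabilityMeasure μ]
    {n k : ℕ} (hk1 : 1 ≤ k) (hkn : k ≤ n) (X : Ω → Fin n → ℝ) (hmeas : Measurable X)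
    (hlc : IsLogConcave (μ.map X))
    (huncond : ∀ ε : Fin n → ℝ, (∀ i, ε i = 1 ∨ ε i = -1) →
      μ.map (fun ω i => ε i * X ω i) = μ.map X) :
    ∀ u t : ℝ, 1 < u → 0 < t →
      (μ {ω | u * t ≤ kthMax k (X ω)}).toReal ≤
        (μ {ω | t ≤ kthMax k (X ω)}).toReal ^ u := by
  intro u t hu _
  have hν : IsUnconditional (μ.map X) := fun ε hε => by
    rw [Measure.map_map (g := (ε * ·)) (by fun_prop) hmeas]
    exact huncond ε hε
  set ν := μ.map X
  have : IsProbabilityMeasure ν := Measure.isProbabilityMeasure_map hmeas.aemeasurable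
  obtain ⟨c, hc⟩ := hν.exists_measure_eq_mul_measure_inter_Ici hlc.measure_setOf_apply_eq_zero_or
  set ν' := c • ν.restrict (Set.Ici 0)
  set A : ℝ → Set (Fin n → ℝ) := fun s => {x | s ≤ kthMax k x}
  have hA : ∀ s, MeasurableSet (A s) := measurableSet_le_kthMax hk1 hkn
  have hνA : ∀ s, ν (A s) = ν' (A s) := fun s => by
    rw [hc (A s) (hA s) fun i => ?_, Measure.smul_apply, Measure.restrict_apply' measurableSet_Ici,
      smul_eq_mul]
    ext x
    exact iff_of_eq (congrArg (s ≤ ·) (kthMax_mul_of_sign k (flipSign_eq_one_or i) x))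
  have hν'univ : ν' Set.univ = 1 := by
    rw [Measure.smul_apply, Measure.restrict_apply' measurableSet_Ici, smul_eq_mul,
      ← hc _ .univ fun _ => Set.preimage_univ, measure_univ]
  have key := hlc.smul_restrict_rpow_mul_rpow_le (convex_Ici 0) measurableSet_Ici c (hA (u * t))
    .univ ⟨inv_pos.2 (by linarith), inv_lt_one_of_one_lt₀ hu⟩
    (by simpa using inv_smul_add_smul_Ici_subset_setOf_le_kthMax hk1 hkn hu.le t)
  rw [hν'univ, ENNReal.one_rpow, mul_one, ← hνA, ← hνA,
    ENNReal.rpow_inv_le_iff (by linarith)] at key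
  have hpre : ∀ s, {ω | s ≤ kthMax k (X ω)} = X ⁻¹' A s := fun _ => rfl
  rw [hpre, hpre, ← Measure.map_apply hmeas (hA _),
    ← Measure.map_apply hmeas (hA _), ENNReal.toReal_rpow]
  exact ENNReal.toReal_mono (ENNReal.rpow_ne_top_of_nonneg (by linarith) (measure_ne_top _ _)) key
end
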